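/- There exists a Banach limit L on ℓ∞ which is invariant under the Cesàro operator, i.e. L(C x) = L(x) for all x ∈ ℓ∞, where (C x)ₙ = (1/n) Σᵢ₌₁ⁿ xᵢ. -/

import Mathlib

noncomputable section
open scoped ENNReal

/-- `ℓ∞`: the Banach space of bounded real sequences with the sup norm. -/
abbrev Linf : Type := lp (fun _ : ℕ => ℝ) ∞

/-- The left shift `(x₁,x₂,x₃,…) ↦ (x₂,x₃,x₄,…)` on `ℓ∞`. -/
def shiftSeq (x : Linf) : Linf :=
  ⟨fun n => x (n + 1), memℓp_infty ⟨‖x‖, by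
    rintro r ⟨n, rfl⟩
    exact lp.norm_apply_le_norm ENNReal.top_ne_zero x (n + 1)⟩⟩

/-- The constant sequence `e = (1,1,1,…)` in `ℓ∞`. -/
def onesSeq : Linf :=
  ⟨fun _ => 1, memℓp_infty ⟨1, by rintro r ⟨n, rfl⟩; simp⟩⟩

/-- A Banach limit: a positive, shift-invariant continuous linear functional `L` on `ℓ∞`
with `L(1,1,1,…) = 1`. -/
def IsBanachLimit (L : StrongDual ℝ Linf) : Prop :=
  (∀ x : Linf, (∀ n, 0 ≤ x n) → 0 ≤ L x) ∧
  (∀ x : Linf, L (shiftSeq x) = L x) ∧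
  L onesSeq = 1

/-- The Cesàro operator on `ℓ∞`: `(Cx)ₙ` is the average of the first `n` entries of `x`
(indices being `0`-based, the `n`-th entry of `Cx` is the average of `x₀,…,xₙ`). -/
def cesaro (x : Linf) : Linf :=
  ⟨fun n => (∑ i ∈ Finset.range (n + 1), x i) / (n + 1), memℓp_infty ⟨‖x‖, by
    rintro r ⟨n, rfl⟩
    have hpos : (0:ℝ) < (n:ℝ) + 1 := by positivity
    have h1 : ‖∑ i ∈ Finset.range (n + 1), x i‖ ≤ ((n:ℝ) + 1) * ‖x‖ := by
      calc ‖∑ i ∈ Finset.range (n + 1), x i‖ ≤ ∑ i ∈ Finset.range (n + 1), ‖x i‖ :=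
            norm_sum_le _ _
        _ ≤ ∑ _i ∈ Finset.range (n + 1), ‖x‖ :=
            Finset.sum_le_sum fun i _ => lp.norm_apply_le_norm ENNReal.top_ne_zero x i
        _ = ((n:ℝ) + 1) * ‖x‖ := by
            rw [Finset.sum_const, Finset.card_range, nsmul_eq_mul]
            push_cast; ring
    show ‖(∑ i ∈ Finset.range (n + 1), x i) / ((n:ℝ) + 1)‖ ≤ ‖x‖
    have : ‖(∑ i ∈ Finset.range (n + 1), x i) / ((n:ℝ) + 1)‖
        = ‖∑ i ∈ Finset.range (n + 1), x i‖ / ((n:ℝ) + 1) := by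
      rw [norm_div, Real.norm_eq_abs ((n:ℝ)+1), abs_of_pos hpos]
    rw [this, div_le_iff₀ hpos]
    linarith [h1]⟩⟩

/-! Let `φ` take the limit of a bounded sequence along a nonprincipal ultrafilter. The Cesàro
operator `C` is a positive contraction fixing `(1,1,1,…)`, so a weak-* limit point `L` of the
functionals `φ ∘ (1/n) ∑_{j<n} Cʲ` is positive and normalised, and it is `C`-invariant because
`L (C x - x)` is a limit of `(φ (Cⁿ x) - φ x) / n`. Shift invariance then comes for free:
`C (S x - x)` tends to `0`, a property every `Cʲ` preserves, so
`L (S x - x) = L (C (S x - x)) = 0`. -/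

open Filter Finset Topology

section UltrafilterLim

variable {ι E : Type*} [SeminormedAddCommGroup E] [NormedSpace ℝ E] (𝒰 : Ultrafilter ι)

theorem tendsto_limUnder_of_forall_norm_le {u : ι → ℝ} {M : ℝ} (hu : ∀ i, ‖u i‖ ≤ M) :
    Tendsto u 𝒰 (𝓝 (limUnder (𝒰 : Filter ι) u)) := by
  obtain ⟨a, -, ha⟩ := (isCompact_closedBall (0 : ℝ) M).ultrafilter_le_nhds' (𝒰.map u)
    (Ultrafilter.mem_map.2 (univ_mem' fun i => mem_closedBall_zero_iff.2 (hu i)))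
  exact tendsto_nhds_limUnder ⟨a, ha⟩

variable {𝒰} {Λ : ι → StrongDual ℝ E} {C : ℝ}

theorem tendsto_limUnder_apply (hΛ : ∀ i, ‖Λ i‖ ≤ C) (x : E) :
    Tendsto (fun i => Λ i x) 𝒰 (𝓝 (limUnder (𝒰 : Filter ι) fun i => Λ i x)) :=
  tendsto_limUnder_of_forall_norm_le 𝒰 fun i => (Λ i).le_of_opNorm_le (hΛ i) x

variable (𝒰) in
noncomputable def ultrafilterLim (hΛ : ∀ i, ‖Λ i‖ ≤ C) : StrongDual ℝ E :=
  LinearMap.mkContinuous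
    { toFun x := limUnder (𝒰 : Filter ι) fun i => Λ i x
      map_add' x y := by
        simpa using ((tendsto_limUnder_apply hΛ x).add (tendsto_limUnder_apply hΛ y)).limUnder_eq
      map_smul' c x := by
        simpa using ((tendsto_limUnder_apply hΛ x).const_mul c).limUnder_eq }
    C fun x => le_of_tendsto (tendsto_limUnder_apply hΛ x).norm
      (Eventually.of_forall fun i => (Λ i).le_of_opNorm_le (hΛ i) x)

theorem tendsto_ultrafilterLim (hΛ : ∀ i, ‖Λ i‖ ≤ C) (x : E) :
    Tendsto (fun i => Λ i x) 𝒰 (𝓝 (ultrafilterLim 𝒰 hΛ x)) :=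
  tendsto_limUnder_apply hΛ x

theorem ultrafilterLim_eq_of_tendsto (hΛ : ∀ i, ‖Λ i‖ ≤ C) {x : E} {a : ℝ}
    (h : Tendsto (fun i => Λ i x) 𝒰 (𝓝 a)) : ultrafilterLim 𝒰 hΛ x = a :=
  tendsto_nhds_unique (tendsto_ultrafilterLim hΛ x) h

theorem ultrafilterLim_nonneg (hΛ : ∀ i, ‖Λ i‖ ≤ C) {x : E} (hx : ∀ i, 0 ≤ Λ i x) :
    0 ≤ ultrafilterLim 𝒰 hΛ x :=
  ge_of_tendsto' (tendsto_ultrafilterLim hΛ x) hx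

end UltrafilterLim

section InvariantMean

variable {E : Type*} [SeminormedAddCommGroup E] [NormedSpace ℝ E]
  (φ : StrongDual ℝ E) (T : E →L[ℝ] E)

noncomputable def iterateMean (n : ℕ) : StrongDual ℝ E :=
  (n : ℝ)⁻¹ • ∑ j ∈ range n, φ ∘L T ^ j

theorem iterateMean_apply (n : ℕ) (x : E) :
    iterateMean φ T n x = (n : ℝ)⁻¹ * ∑ j ∈ range n, φ ((T ^ j) x) := by
  simp [iterateMean]

variable {T}

theorem norm_pow_apply_le (hT : ‖T‖ ≤ 1) (j : ℕ) (x : E) : ‖(T ^ j) x‖ ≤ ‖x‖ := by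
  induction j with
  | zero => simp
  | succ j ih =>
    rw [pow_succ', mul_apply_eq_comp]
    exact ((T.le_of_opNorm_le hT _).trans_eq (one_mul _)).trans ih

theorem norm_iterateMean_le (hT : ‖T‖ ≤ 1) (n : ℕ) : ‖iterateMean φ T n‖ ≤ ‖φ‖ := by
  refine ContinuousLinearMap.opNorm_le_bound _ (norm_nonneg φ) fun x => ?_
  rcases n.eq_zero_or_pos with rfl | hn
  · simp [iterateMean]; positivity
  have hterm : ∀ j, ‖φ ((T ^ j) x)‖ ≤ ‖φ‖ * ‖x‖ := fun j =>
    (φ.le_opNorm _).trans (by gcongr; exact norm_pow_apply_le hT j x)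
  calc ‖iterateMean φ T n x‖ ≤ (n : ℝ)⁻¹ * ∑ j ∈ range n, ‖φ ((T ^ j) x)‖ := by
        rw [iterateMean_apply, norm_mul, norm_inv, RCLike.norm_natCast]
        gcongr
        exact norm_sum_le _ _
    _ ≤ (n : ℝ)⁻¹ * (n * (‖φ‖ * ‖x‖)) := by
        gcongr
        simpa using sum_le_sum fun j (_ : j ∈ range n) => hterm j
    _ = ‖φ‖ * ‖x‖ := by field_simp

theorem iterateMean_apply_map_sub (n : ℕ) (x : E) :
    iterateMean φ T n (T x - x) = (n : ℝ)⁻¹ * (φ ((T ^ n) x) - φ x) := by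
  have hsucc : ∀ j, (T ^ j) (T x) = (T ^ (j + 1)) x := fun j => by
    rw [pow_succ, mul_apply_eq_comp]
  simp only [iterateMean_apply, map_sub, hsucc]
  rw [← mul_sub, ← sum_sub_distrib, sum_range_sub (fun j => φ ((T ^ j) x)), pow_zero,
    one_apply_eq_self]

noncomputable def invariantMean (hT : ‖T‖ ≤ 1) : StrongDual ℝ E :=
  ultrafilterLim (hyperfilter ℕ) (norm_iterateMean_le φ hT)

variable (hT : ‖T‖ ≤ 1)

theorem invariantMean_apply_map (x : E) : invariantMean φ hT (T x) = invariantMean φ hT x := by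
  rw [← sub_eq_zero, ← map_sub]
  refine ultrafilterLim_eq_of_tendsto _ (Tendsto.mono_left ?_ Nat.hyperfilter_le_atTop)
  simp only [iterateMean_apply_map_sub]
  have hbound : ∀ n : ℕ, ‖φ ((T ^ n) x) - φ x‖ ≤ 2 * ‖φ‖ * ‖x‖ := fun n => calc
    ‖φ ((T ^ n) x) - φ x‖ ≤ ‖φ‖ * ‖(T ^ n) x‖ + ‖φ‖ * ‖x‖ :=
      (norm_sub_le _ _).trans (add_le_add (φ.le_opNorm _) (φ.le_opNorm _))
    _ ≤ 2 * ‖φ‖ * ‖x‖ := by nlinarith [norm_pow_apply_le hT n x, norm_nonneg φ]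
  refine squeeze_zero_norm (fun n => ?_)
    (by simpa using tendsto_inv_atTop_nhds_zero_nat.mul_const (2 * ‖φ‖ * ‖x‖))
  rw [norm_mul, norm_inv, RCLike.norm_natCast]
  gcongr
  exact hbound n

theorem invariantMean_nonneg {x : E} (hx : ∀ j, 0 ≤ φ ((T ^ j) x)) :
    0 ≤ invariantMean φ hT x :=
  ultrafilterLim_nonneg _ fun n => by
    rw [iterateMean_apply]
    exact mul_nonneg (by positivity) (sum_nonneg fun j _ => hx j)

theorem invariantMean_eq_zero {x : E} (hx : ∀ j, φ ((T ^ j) x) = 0) :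
    invariantMean φ hT x = 0 :=
  ultrafilterLim_eq_of_tendsto _ (tendsto_const_nhds.congr fun n => by
    simp only [iterateMean_apply, hx, sum_const_zero, mul_zero])

theorem invariantMean_apply_of_map_eq_self {v : E} (hv : T v = v) :
    invariantMean φ hT v = φ v := by
  refine ultrafilterLim_eq_of_tendsto _ (tendsto_const_nhds.congr' ?_)
  filter_upwards [(eventually_ne_atTop 0).filter_mono Nat.hyperfilter_le_atTop] with n hn
  have hpow : ∀ j, (T ^ j) v = v := fun j => by
    rw [FunLike.coe_pow_eq_iterate]; exact Function.iterate_fixed hv j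
  simp [iterateMean_apply, hpow, hn]

end InvariantMean

section Linf

noncomputable def hyperfilterLim : StrongDual ℝ Linf :=
  ultrafilterLim (hyperfilter ℕ) (Λ := fun n => lp.evalCLM ℝ (fun _ : ℕ => ℝ) ∞ n)
    fun _ => LinearMap.mkContinuous_norm_le _ zero_le_one _

theorem hyperfilterLim_eq_of_tendsto {x : Linf} {a : ℝ}
    (h : Tendsto (fun n => x n) atTop (𝓝 a)) : hyperfilterLim x = a :=
  ultrafilterLim_eq_of_tendsto _ (h.mono_left Nat.hyperfilter_le_atTop)

theorem hyperfilterLim_nonneg {x : Linf} (hx : ∀ n, 0 ≤ x n) : 0 ≤ hyperfilterLim x :=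
  ultrafilterLim_nonneg _ hx

theorem cesaro_apply (x : Linf) (n : ℕ) :
    cesaro x n = (∑ i ∈ range (n + 1), x i) / (n + 1) := rfl

theorem norm_cesaro_le (x : Linf) : ‖cesaro x‖ ≤ ‖x‖ := by
  refine lp.norm_le_of_forall_le (norm_nonneg x) fun n => ?_
  have hpos : (0 : ℝ) < n + 1 := by positivity
  rw [cesaro_apply, norm_div, Real.norm_of_nonneg hpos.le, div_le_iff₀ hpos]
  calc ‖∑ i ∈ range (n + 1), x i‖ ≤ ∑ _i ∈ range (n + 1), ‖x‖ :=
        norm_sum_le_of_le _ fun i _ => lp.norm_apply_le_norm ENNReal.top_ne_zero x i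
    _ = ‖x‖ * ((n : ℝ) + 1) := by simp [mul_comm]

noncomputable def cesaroCLM : Linf →L[ℝ] Linf :=
  LinearMap.mkContinuous
    { toFun := cesaro
      map_add' x y := lp.ext <| funext fun n => by
        simp only [lp.coeFn_add, Pi.add_apply, cesaro_apply, sum_add_distrib, add_div]
      map_smul' c x := lp.ext <| funext fun n => by
        simp only [lp.coeFn_smul, Pi.smul_apply, smul_eq_mul, cesaro_apply, ← mul_sum,
          mul_div_assoc, RingHom.id_apply] }
    1 fun x => by rw [one_mul]; exact norm_cesaro_le x

theorem norm_cesaroCLM_le : ‖cesaroCLM‖ ≤ 1 :=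
  LinearMap.mkContinuous_norm_le _ zero_le_one _

theorem cesaro_nonneg {x : Linf} (hx : ∀ n, 0 ≤ x n) (n : ℕ) : 0 ≤ cesaro x n :=
  div_nonneg (sum_nonneg fun i _ => hx i) (by positivity)

theorem tendsto_cesaro {x : Linf} {a : ℝ} (h : Tendsto (fun n => x n) atTop (𝓝 a)) :
    Tendsto (fun n => cesaro x n) atTop (𝓝 a) := by
  refine (h.cesaro.comp (tendsto_add_atTop_nat 1)).congr fun n => ?_
  simp [cesaro_apply, div_eq_inv_mul]

theorem cesaro_onesSeq : cesaro onesSeq = onesSeq :=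
  lp.ext <| funext fun n => by
    show (∑ _i ∈ range (n + 1), (1 : ℝ)) / (n + 1) = 1
    simpa using div_self (Nat.cast_add_one_ne_zero (R := ℝ) n)

theorem tendsto_cesaro_shiftSeq_sub (x : Linf) :
    Tendsto (fun n => cesaro (shiftSeq x - x) n) atTop (𝓝 0) := by
  have htelescope : ∀ n, cesaro (shiftSeq x - x) n = (x (n + 1) - x 0) / (n + 1) := fun n => by
    rw [cesaro_apply, lp.coeFn_sub]
    exact congrArg (· / _) (sum_range_sub (fun i => x i) (n + 1))
  have hnorm : ∀ i, ‖x i‖ ≤ ‖x‖ := lp.norm_apply_le_norm ENNReal.top_ne_zero x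
  refine squeeze_zero_norm (fun n => ?_)
    (by simpa using (tendsto_one_div_add_atTop_nhds_zero_nat (𝕜 := ℝ)).const_mul (2 * ‖x‖))
  have hpos : (0 : ℝ) < n + 1 := by positivity
  rw [htelescope, norm_div, Real.norm_of_nonneg hpos.le, div_eq_mul_inv]
  gcongr
  linarith [norm_sub_le (x (n + 1)) (x 0), hnorm (n + 1), hnorm 0]

theorem cesaroCLM_pow_nonneg {x : Linf} (hx : ∀ n, 0 ≤ x n) (j n : ℕ) :
    0 ≤ (cesaroCLM ^ j) x n := by
  rw [FunLike.coe_pow_eq_iterate]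
  exact Function.Iterate.rec (fun y : Linf => ∀ n, 0 ≤ y n) hx (fun _ => cesaro_nonneg) j n

theorem tendsto_cesaroCLM_pow {x : Linf} {a : ℝ} (h : Tendsto (fun n => x n) atTop (𝓝 a))
    (j : ℕ) : Tendsto (fun n => (cesaroCLM ^ j) x n) atTop (𝓝 a) := by
  rw [FunLike.coe_pow_eq_iterate]
  exact Function.Iterate.rec (fun y : Linf => Tendsto (fun n => y n) atTop (𝓝 a)) h
    (fun _ => tendsto_cesaro) j

noncomputable def cesaroBanachLimit : StrongDual ℝ Linf :=
  invariantMean hyperfilterLim norm_cesaroCLM_le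

theorem cesaroBanachLimit_cesaro (x : Linf) :
    cesaroBanachLimit (cesaro x) = cesaroBanachLimit x :=
  invariantMean_apply_map _ _ x

theorem cesaroBanachLimit_nonneg {x : Linf} (hx : ∀ n, 0 ≤ x n) : 0 ≤ cesaroBanachLimit x :=
  invariantMean_nonneg _ _ fun j => hyperfilterLim_nonneg (cesaroCLM_pow_nonneg hx j)

theorem cesaroBanachLimit_eq_zero_of_tendsto {x : Linf}
    (h : Tendsto (fun n => x n) atTop (𝓝 0)) : cesaroBanachLimit x = 0 :=
  invariantMean_eq_zero _ _ fun j => hyperfilterLim_eq_of_tendsto (tendsto_cesaroCLM_pow h j)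

theorem cesaroBanachLimit_shiftSeq (x : Linf) :
    cesaroBanachLimit (shiftSeq x) = cesaroBanachLimit x := by
  rw [← sub_eq_zero, ← map_sub, ← cesaroBanachLimit_cesaro]
  exact cesaroBanachLimit_eq_zero_of_tendsto (tendsto_cesaro_shiftSeq_sub x)

theorem cesaroBanachLimit_onesSeq : cesaroBanachLimit onesSeq = 1 := by
  rw [cesaroBanachLimit, invariantMean_apply_of_map_eq_self _ _ cesaro_onesSeq]
  exact hyperfilterLim_eq_of_tendsto tendsto_const_nhds

end Linf

theorem exists_cesaro_invariant_banachLimit :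
    ∃ L : StrongDual ℝ Linf, IsBanachLimit L ∧
      ∀ x : Linf, L (cesaro x) = L x :=
  ⟨cesaroBanachLimit,
    ⟨fun _ => cesaroBanachLimit_nonneg, cesaroBanachLimit_shiftSeq, cesaroBanachLimit_onesSeq⟩,
    cesaroBanachLimit_cesaro⟩
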